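/- Let F be a supertropical semifield in which the squaring map x ↦ x² is a bijection of F (with inverse written √), and let Q be a strictly quasilinear quadratic form on a supertropical vector space V over F: Q(αv) = α²Q(v) for all α ∈ F, v ∈ V, and Q(v+w) = Q(v) + Q(w) for all v,w ∈ V. Define B_Q(v,w) := √(Q(v)·Q(w)). Then B_Q is a strict symmetric supertropical bilinear form on V with B_Q(v,v) = Q(v) for all v, and every pair of vectors of V is weakly Cauchy-Schwartz with respect to B_Q. -/
import Mathlib


/-- A supertropical semifield (with an adjoined zero element), following
Izhakian–Knebusch–Rowen: a commutative semiring `F` together with an idempotent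
additive and multiplicative ghost map `ν : F → F` whose fixed points are the
ghost elements (together with `0`), such that `a + b = ν a` when `ν a = ν b`
and `a + b ∈ {a, b}` otherwise, the tangible elements `T = F ∖ (G ∪ {0})`
form a multiplicative group, and `ν` maps `T` onto the nonzero ghosts. -/
class SupertropicalSemifield (F : Type*) extends CommSemiring F where
  nu : F → F
  nu_zero : nu 0 = 0
  nu_idem : ∀ a, nu (nu a) = nu a
  nu_add : ∀ a b, nu (a + b) = nu a + nu b
  nu_mul : ∀ a b, nu (a * b) = nu a * nu b
  add_eq_nu : ∀ a b, nu a = nu b → a + b = nu a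
  add_cases : ∀ a b, nu a ≠ nu b → a + b = a ∨ a + b = b
  tangible_inv : ∀ a, nu a ≠ a → ∃ b, nu b ≠ b ∧ a * b = 1
  nu_onto : ∀ g, nu g = g → g ≠ 0 → ∃ t, nu t ≠ t ∧ nu t = g

namespace Supertropical

open SupertropicalSemifield

variable (F : Type*) [SupertropicalSemifield F]

/-- `a` is ghost or zero (i.e. `a ∈ G ∪ {0}`, the fixed points of `ν`). -/
def Ghost0 (a : F) : Prop := nu a = a

/-- `a` is tangible: `a ∈ T = F ∖ (G ∪ {0})`. -/
def Tangible (a : F) : Prop := nu a ≠ a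

/-- The ghost-surpassing relation on `F`:  `b ⊨_gs a` iff `b = a + c` with `c` ghost or zero. -/
def GS (b a : F) : Prop := ∃ c, Ghost0 F c ∧ b = a + c

/-- `a ≥_ν b`. -/
def nuGE (a b : F) : Prop := nu a + nu b = nu a

/-- `a >_ν b`. -/
def nuGT (a b : F) : Prop := nuGE F a b ∧ nu a ≠ nu b

/-- `a ≅_ν b` (`ν`-matched). -/
def nuEq (a b : F) : Prop := nu a = nu b

section VS

variable {V : Type*} [AddCommMonoid V] [Module F V]

/-- `v` lies in the ghost submodule `H₀ = eV`, `e = 1 + 1`. -/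
def GhostV (v : V) : Prop := ∃ u : V, v = ((1 : F) + 1) • u

/-- The ghost-surpassing relation on a supertropical vector space:
`v ⊨_gs w` iff `v = w + h` with `h ∈ H₀`. -/
def GSV (v w : V) : Prop := ∃ h : V, GhostV F h ∧ v = w + h

variable {W : Type*} [AddCommMonoid W] [Module F W]

/-- A supertropical map `φ : V → W`: `φ(v + w) ⊨_gs φ(v) + φ(w)` and
`φ(a • v) = a • φ(v)` for tangible `a`. -/
def STMap (φ : V → W) : Prop :=
  (∀ v w : V, GSV F (φ (v + w)) (φ v + φ w)) ∧
    ∀ a : F, Tangible F a → ∀ v : V, φ (a • v) = a • φ v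

/-- A family of vectors is tropically independent if no linear combination with
tangible coefficients, not all zero, lies in the ghost submodule. -/
def TropIndep {m : ℕ} (v : Fin m → V) : Prop :=
  ∀ β : Fin m → F, (∀ i, Tangible F (β i) ∨ β i = 0) → (∃ i, β i ≠ 0) →
    ¬ GhostV F (∑ i, β i • v i)

/-- `S ⊆ V` has rank `r`: it contains `r` tropically independent vectors, and no
tropically independent family in `S` has more than `r` members. -/
def HasRank (S : Set V) (r : ℕ) : Prop :=
  (∃ v : Fin r → V, (∀ i, v i ∈ S) ∧ TropIndep F v) ∧
    ∀ (m : ℕ) (v : Fin m → V), (∀ i, v i ∈ S) → TropIndep F v → m ≤ r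

/-- A supertropical bilinear form: a supertropical map in each variable. -/
def IsBilinear (B : V → V → F) : Prop :=
  (∀ w : V, STMap F (fun v => B v w)) ∧ ∀ v : V, STMap F (fun w => B v w)

/-- `B` is supertropically symmetric: `⟨v,w⟩ + ⟨w,v⟩` is ghost (or zero) for all `v, w`. -/
def SupSymmetric (B : V → V → F) : Prop := ∀ v w : V, Ghost0 F (B v w + B w v)

/-- A strict bilinear form. -/
def IsStrict (B : V → V → F) : Prop :=
  ∀ (a₁ a₂ b₁ b₂ : F) (v₁ v₂ w₁ w₂ : V),
    B (a₁ • v₁ + a₂ • v₂) (b₁ • w₁ + b₂ • w₂) =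
      a₁ * b₁ * B v₁ w₁ + a₁ * b₂ * B v₁ w₂ + a₂ * b₁ * B v₂ w₁ + a₂ * b₂ * B v₂ w₂

/-- `v` and `w` are compatible: `⟨v,v⟩ + ⟨w,w⟩ ≥_ν ⟨v,w⟩ + ⟨w,v⟩`. -/
def Compatible (B : V → V → F) (v w : V) : Prop :=
  nuGE F (B v v + B w w) (B v w + B w v)

/-- `v` and `w` are strictly compatible. -/
def StrictlyCompatible (B : V → V → F) (v w : V) : Prop :=
  Compatible F B v w ∧
    (nuEq F (B v v) (B w w) ∨ nuGT F (B v v + B w w) (B v w + B w v))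

/-- The pair `{v, w}` is weakly Cauchy-Schwartz: `⟨v,v⟩⟨w,w⟩ ≥_ν ⟨v,w⟩² + ⟨w,v⟩²`. -/
def WeakCS (B : V → V → F) (v w : V) : Prop :=
  nuGE F (B v v * B w w) (B v w ^ 2 + B w v ^ 2)

/-- The pair `{v, w}` is Cauchy-Schwartz: `⟨v,v⟩⟨w,w⟩ >_ν ⟨v,w⟩² + ⟨w,v⟩²`. -/
def CS (B : V → V → F) (v w : V) : Prop :=
  nuGT F (B v v * B w w) (B v w ^ 2 + B w v ^ 2)

end VS

/-- The permanent (supertropical determinant) of a square matrix. -/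
def perm {n : ℕ} (A : Matrix (Fin n) (Fin n) F) : F :=
  ∑ σ : Equiv.Perm (Fin n), ∏ i, A i (σ i)

/-- The supertropical adjoint matrix: the transpose of the matrix of cofactors. -/
def adjSup {n : ℕ} (A : Matrix (Fin (n + 1)) (Fin (n + 1)) F) :
    Matrix (Fin (n + 1)) (Fin (n + 1)) F :=
  Matrix.of fun i j => perm F (A.submatrix (Fin.succAbove j) (Fin.succAbove i))

end Supertropical

namespace Supertropical

open SupertropicalSemifield

variable {F : Type*} [SupertropicalSemifield F]

lemma nu_mul_nu_one (x : F) : nu x * nu 1 = nu x := by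
  have h := nu_mul x 1
  rw [mul_one] at h
  exact h.symm

lemma nu_add_self (a : F) : nu a + nu a = nu a := by
  have h := add_eq_nu (nu a) (nu a) rfl
  rwa [nu_idem] at h

lemma ghost_add_or (a b : F) : nu a + nu b = nu a ∨ nu a + nu b = nu b := by
  by_cases h : nu a = nu b
  · left
    have h2 := add_eq_nu (nu a) (nu b) (by rw [nu_idem, nu_idem, h])
    rwa [nu_idem] at h2
  · exact add_cases (nu a) (nu b) (by rwa [nu_idem, nu_idem])

lemma add_eq_right_of (a b : F) (h1 : nu a + nu b = nu b) (h2 : nu a ≠ nu b) :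
    a + b = b := by
  rcases add_cases a b h2 with h | h
  · exfalso
    apply h2
    have h3 : nu (a + b) = nu a + nu b := nu_add a b
    rw [h, h1] at h3
    exact h3
  · exact h

lemma nu_cancel (a b : F) (hb : nu b ≠ 0) (h : nu a * nu b = nu b * nu b) :
    nu a = nu b := by
  obtain ⟨t, ht, htb⟩ := nu_onto (nu b) (nu_idem b) hb
  obtain ⟨t', _, htt'⟩ := tangible_inv t ht
  have h1 : nu t * nu t' = nu 1 := by rw [← nu_mul, htt']
  calc nu a = nu a * nu 1 := (nu_mul_nu_one a).symm
    _ = nu a * (nu t * nu t') := by rw [h1]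
    _ = (nu a * nu b) * nu t' := by rw [htb]; ring
    _ = (nu b * nu b) * nu t' := by rw [h]
    _ = nu b * (nu t * nu t') := by rw [htb]; ring
    _ = nu b * nu 1 := by rw [h1]
    _ = nu b := nu_mul_nu_one b

lemma frob_aux (a b : F) (h1 : nu a + nu b = nu b) (h2 : nu a ≠ nu b) :
    (a + b) * (a + b) = a * a + b * b := by
  have hab : a + b = b := add_eq_right_of a b h1 h2
  have hi : nu a * nu a + nu a * nu b = nu a * nu b := by
    have h3 := congrArg (fun x => nu a * x) h1
    simpa [mul_add] using h3
  have hii : nu a * nu b + nu b * nu b = nu b * nu b := by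
    have h3 := congrArg (fun x => nu b * x) h1
    simp only [mul_add] at h3
    rwa [mul_comm (nu b) (nu a)] at h3
  have hsum : nu (a * a) + nu (b * b) = nu (b * b) := by
    rw [nu_mul, nu_mul]
    calc nu a * nu a + nu b * nu b
        = nu a * nu a + (nu a * nu b + nu b * nu b) := by rw [hii]
      _ = (nu a * nu a + nu a * nu b) + nu b * nu b := by ring
      _ = nu a * nu b + nu b * nu b := by rw [hi]
      _ = nu b * nu b := hii
  have hne : nu (a * a) ≠ nu (b * b) := by
    intro he
    have he' : nu a * nu a = nu b * nu b := by
      rw [← nu_mul, ← nu_mul, he]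
    have h3 : nu b * nu b + nu a * nu b = nu a * nu b := by rw [← he']; exact hi
    have hcan : nu a * nu b = nu b * nu b := by
      calc nu a * nu b = nu b * nu b + nu a * nu b := h3.symm
        _ = nu a * nu b + nu b * nu b := by ring
        _ = nu b * nu b := hii
    by_cases hb0 : nu b = 0
    · apply h2
      have : nu a + nu b = nu b := h1
      rw [hb0, add_zero] at this
      rw [this, hb0]
    · exact h2 (nu_cancel a b hb0 hcan)
  rw [hab]
  exact (add_eq_right_of (a * a) (b * b) hsum hne).symm

lemma frob (a b : F) : (a + b) * (a + b) = a * a + b * b := by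
  by_cases h : nu a = nu b
  · have hs := add_eq_nu a b h
    have hsq : nu (a * a) = nu (b * b) := by rw [nu_mul, nu_mul, h]
    rw [hs, add_eq_nu (a * a) (b * b) hsq, ← nu_mul]
  · rcases ghost_add_or a b with h1 | h1
    · have h3 := frob_aux b a (by rwa [add_comm] at h1) (Ne.symm h)
      rw [add_comm a b, h3, add_comm (b * b)]
    · exact frob_aux a b h1 h

lemma frob4 (x y z w : F) :
    (x + y + z + w) * (x + y + z + w) = x * x + y * y + z * z + w * w := by
  rw [frob (x + y + z) w, frob (x + y) z, frob x y]

end Supertropical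

open Supertropical in
/-- STATEMENT 19: Over a supertropical semifield where squaring is a bijection
(with inverse `√`), any strictly quasilinear quadratic form `Q` gives rise to
`B_Q(v,w) := √(Q(v)Q(w))`, a strict symmetric supertropical bilinear form with
`B_Q(v,v) = Q(v)`, with respect to which every pair of vectors is weakly
Cauchy-Schwartz. -/
theorem stmt19 {F : Type*} [SupertropicalSemifield F]
    {V : Type*} [AddCommMonoid V] [Module F V]
    (hbij : Function.Bijective (fun x : F => x * x))
    (sqrt : F → F) (hs1 : ∀ a : F, sqrt a * sqrt a = a) (hs2 : ∀ a : F, sqrt (a * a) = a)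
    (Q : V → F)
    (hQs : ∀ (a : F) (v : V), Q (a • v) = a ^ 2 * Q v)
    (hQa : ∀ v w : V, Q (v + w) = Q v + Q w) :
    IsBilinear F (fun v w => sqrt (Q v * Q w)) ∧
    IsStrict F (fun v w => sqrt (Q v * Q w)) ∧
    (∀ v w : V, sqrt (Q v * Q w) = sqrt (Q w * Q v)) ∧
    (∀ v : V, sqrt (Q v * Q v) = Q v) ∧
    (∀ v w : V, WeakCS F (fun v w => sqrt (Q v * Q w)) v w) := by
  have hinj : Function.Injective (fun x : F => x * x) := hbij.1
  have sqrt_mul : ∀ a b : F, sqrt (a * b) = sqrt a * sqrt b := by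
    intro a b
    apply hinj
    show sqrt (a * b) * sqrt (a * b) = (sqrt a * sqrt b) * (sqrt a * sqrt b)
    rw [hs1]
    calc a * b = (sqrt a * sqrt a) * (sqrt b * sqrt b) := by rw [hs1, hs1]
      _ = (sqrt a * sqrt b) * (sqrt a * sqrt b) := by ring
  have sqrt_add2 : ∀ a b : F, sqrt (a * a + b * b) = a + b := by
    intro a b
    rw [← frob a b, hs2]
  -- additivity of B in the first variable, for fixed second argument value
  have Badd : ∀ (v v' : V) (q : F),
      sqrt (Q (v + v') * q) = sqrt (Q v * q) + sqrt (Q v' * q) := by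
    intro v v' q
    have harg : Q (v + v') * q
        = sqrt (Q v * q) * sqrt (Q v * q) + sqrt (Q v' * q) * sqrt (Q v' * q) := by
      rw [hs1, hs1, hQa, add_mul]
    rw [harg, sqrt_add2]
  have Bsmul : ∀ (a : F) (v : V) (q : F),
      sqrt (Q (a • v) * q) = a * sqrt (Q v * q) := by
    intro a v q
    have harg : Q (a • v) * q = (a * a) * (Q v * q) := by rw [hQs]; ring
    rw [harg, sqrt_mul, hs2]
  have ghost0 : GhostV F (0 : F) := ⟨0, (smul_zero _).symm⟩
  have gsv_of_eq : ∀ x y : F, x = y → GSV F x y := by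
    intro x y hxy
    exact ⟨0, ghost0, by rw [hxy, add_zero]⟩
  have nuGE_self_add : ∀ x : F, nuGE F x (x + x) := by
    intro x
    unfold nuGE
    rw [SupertropicalSemifield.nu_add, nu_add_self, nu_add_self]
  refine ⟨⟨?_, ?_⟩, ?_, ?_, ?_, ?_⟩
  · -- STMap in the first variable
    intro w
    constructor
    · intro v v'
      exact gsv_of_eq _ _ (Badd v v' (Q w))
    · intro a _ v
      simp only [smul_eq_mul]
      exact Bsmul a v (Q w)
  · -- STMap in the second variable
    intro v
    constructor
    · intro w w'
      show GSV F (sqrt (Q v * Q (w + w'))) (sqrt (Q v * Q w) + sqrt (Q v * Q w'))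
      apply gsv_of_eq
      rw [mul_comm (Q v) (Q (w + w')), mul_comm (Q v) (Q w), mul_comm (Q v) (Q w')]
      exact Badd w w' (Q v)
    · intro a _ w
      show sqrt (Q v * Q (a • w)) = a • sqrt (Q v * Q w)
      simp only [smul_eq_mul]
      rw [mul_comm (Q v) (Q (a • w)), mul_comm (Q v) (Q w)]
      exact Bsmul a w (Q v)
  · -- strictness
    intro a₁ a₂ b₁ b₂ v₁ v₂ w₁ w₂
    simp only []
    have key : ∀ a b x y : F,
        a ^ 2 * b ^ 2 * (x * y) = (a * b * sqrt (x * y)) * (a * b * sqrt (x * y)) := by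
      intro a b x y
      symm
      calc (a * b * sqrt (x * y)) * (a * b * sqrt (x * y))
          = a ^ 2 * b ^ 2 * (sqrt (x * y) * sqrt (x * y)) := by ring
        _ = a ^ 2 * b ^ 2 * (x * y) := by rw [hs1]
    have harg : Q (a₁ • v₁ + a₂ • v₂) * Q (b₁ • w₁ + b₂ • w₂)
        = (a₁ * b₁ * sqrt (Q v₁ * Q w₁) + a₁ * b₂ * sqrt (Q v₁ * Q w₂)
            + a₂ * b₁ * sqrt (Q v₂ * Q w₁) + a₂ * b₂ * sqrt (Q v₂ * Q w₂))
          * (a₁ * b₁ * sqrt (Q v₁ * Q w₁) + a₁ * b₂ * sqrt (Q v₁ * Q w₂)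
            + a₂ * b₁ * sqrt (Q v₂ * Q w₁) + a₂ * b₂ * sqrt (Q v₂ * Q w₂)) := by
      rw [hQa, hQa, hQs, hQs, hQs, hQs, frob4]
      calc (a₁ ^ 2 * Q v₁ + a₂ ^ 2 * Q v₂) * (b₁ ^ 2 * Q w₁ + b₂ ^ 2 * Q w₂)
          = a₁ ^ 2 * b₁ ^ 2 * (Q v₁ * Q w₁) + a₁ ^ 2 * b₂ ^ 2 * (Q v₁ * Q w₂)
            + a₂ ^ 2 * b₁ ^ 2 * (Q v₂ * Q w₁) + a₂ ^ 2 * b₂ ^ 2 * (Q v₂ * Q w₂) := by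
            ring
        _ = _ := by rw [key a₁ b₁, key a₁ b₂, key a₂ b₁, key a₂ b₂]
    rw [harg, hs2]
  · -- symmetry
    intro v w
    rw [mul_comm]
  · -- B v v = Q v
    intro v
    exact hs2 (Q v)
  · -- weak Cauchy-Schwartz
    intro v w
    show nuGE F (sqrt (Q v * Q v) * sqrt (Q w * Q w))
      (sqrt (Q v * Q w) ^ 2 + sqrt (Q w * Q v) ^ 2)
    have h1 : sqrt (Q v * Q v) * sqrt (Q w * Q w) = Q v * Q w := by
      rw [hs2, hs2]
    have h2 : sqrt (Q v * Q w) ^ 2 = Q v * Q w := by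
      rw [pow_two, hs1]
    have h3 : sqrt (Q w * Q v) ^ 2 = Q v * Q w := by
      rw [pow_two, hs1, mul_comm]
    rw [h1, h2, h3]
    exact nuGE_self_add (Q v * Q w)
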